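/- Let h, h' in N^T with h' majorized by h, and r in N^N. If there exists an N×T (0,1)-matrix with row sums r and column sums h, then there exists an N×T (0,1)-matrix with row sums r and column sums h'. -/

import Mathlib

/-- Sum of the `k` largest entries of `x` (padding with zeros if `k` exceeds the length). -/
def topSum {N : ℕ} (x : Fin N → ℕ) (k : ℕ) : ℕ :=
  (Finset.univ.powerset.filter (fun S : Finset (Fin N) => S.card ≤ k)).sup
    (fun S => ∑ i ∈ S, x i)

/-! For `x : ι → ℕ` let `excess x t = ∑ i, (x i - t)⁺`. If `y` is majorized by `x` then
`excess y ≤ excess x` pointwise, with equality at `t = 0`. Whenever the inequality is strict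
somewhere, take the first maximal interval `(t₁, t₂)` of strictness: second differences of
`excess` count the entries equal to `t`, so there are columns `b`, `a` with `x b = t₁`, `x a = t₂`.
Moving one unit from column `a` to column `b` lowers `excess x` by one exactly on `(t₁, t₂)`,
so domination survives and `∑ t, excess x t` drops; in a 0-1 matrix the move is realised by
swapping the entries of a row with a `1` in column `a` and a `0` in column `b`. Once
`excess x = excess y`, the vector `y` is a rearrangement of `x`, and permuting columns finishes.
-/

open Finset

section Excess

variable {ι : Type*} [Fintype ι]

/-- Subtraction on `ℕ` truncates, so the summand is the positive part `(x i - t)⁺`. -/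
def excess (x : ι → ℕ) (t : ℕ) : ℕ := ∑ i, (x i - t)

@[simp] lemma excess_zero (x : ι → ℕ) : excess x 0 = ∑ i, x i := by
  simp [excess]

lemma excess_eq_zero_of_le {x : ι → ℕ} {t : ℕ} (hx : ∀ i, x i ≤ t) : excess x t = 0 :=
  sum_eq_zero fun i _ => Nat.sub_eq_zero_of_le (hx i)

lemma card_filter_eq_zero_add_excess_zero (x : ι → ℕ) :
    #{i | x i = 0} + excess x 0 = Fintype.card ι + excess x 1 := by
  simp only [excess, card_filter, Fintype.card_eq_sum_ones, ← sum_add_distrib]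
  exact sum_congr rfl fun i _ => by split_ifs <;> omega

lemma card_filter_eq_succ_add_excess (x : ι → ℕ) (s : ℕ) :
    #{i | x i = s + 1} + 2 * excess x (s + 1) = excess x s + excess x (s + 1 + 1) := by
  simp only [excess, card_filter, mul_sum, ← sum_add_distrib]
  exact sum_congr rfl fun i _ => by split_ifs <;> omega

lemma card_filter_eq_of_excess_eq {x y : ι → ℕ} (h : ∀ t, excess x t = excess y t) (v : ℕ) :
    #{i | x i = v} = #{i | y i = v} := by
  rcases v with _ | s
  · have := card_filter_eq_zero_add_excess_zero x
    have := card_filter_eq_zero_add_excess_zero y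
    have := h 0; have := h 1
    omega
  · have := card_filter_eq_succ_add_excess x s
    have := card_filter_eq_succ_add_excess y s
    have := h s; have := h (s + 1); have := h (s + 1 + 1)
    omega

lemma exists_perm_of_excess_eq {x y : ι → ℕ} (h : ∀ t, excess x t = excess y t) :
    ∃ σ : Equiv.Perm ι, y = x ∘ σ := by
  classical
  have hfiber (v : ℕ) : Fintype.card {i // y i = v} = Fintype.card {i // x i = v} := by
    simp only [Fintype.card_subtype, card_filter_eq_of_excess_eq h v]
  exact ⟨Equiv.ofFiberEquiv fun v => Fintype.equivOfCardEq (hfiber v),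
    funext fun i => (Equiv.ofFiberEquiv_map _ i).symm⟩

lemma exists_apply_eq_of_excess_lt_succ {x y : ι → ℕ} {t : ℕ} (hle : ∀ s, excess y s ≤ excess x s)
    (heq : excess y t = excess x t) (hlt : excess y (t + 1) < excess x (t + 1)) :
    ∃ i, x i = t := by
  suffices 0 < #{i | x i = t} by simpa using filter_nonempty_iff.mp (card_pos.mp this)
  obtain rfl | ⟨s, rfl⟩ : t = 0 ∨ ∃ s, t = s + 1 := by cases t <;> simp
  · have := card_filter_eq_zero_add_excess_zero x
    have := card_filter_eq_zero_add_excess_zero y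
    simp only [zero_add] at hlt
    omega
  · have := card_filter_eq_succ_add_excess x s
    have := card_filter_eq_succ_add_excess y s
    have := hle s
    omega

lemma exists_apply_eq_succ_of_excess_lt {x y : ι → ℕ} {t : ℕ} (hlt : excess y t < excess x t)
    (hge : excess x (t + 1) ≤ excess y (t + 1))
    (hle : excess y (t + 1 + 1) ≤ excess x (t + 1 + 1)) :
    ∃ i, x i = t + 1 := by
  suffices 0 < #{i | x i = t + 1} by simpa using filter_nonempty_iff.mp (card_pos.mp this)
  have := card_filter_eq_succ_add_excess x t
  have := card_filter_eq_succ_add_excess y t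
  omega

/-- `(x b, x a)` is the first maximal interval on which `excess y < excess x`. -/
lemma exists_excess_lt_on_Ioo {x y : ι → ℕ} (h0 : excess y 0 = excess x 0)
    (hle : ∀ t, excess y t ≤ excess x t) (hlt : ∃ t, excess y t < excess x t) :
    ∃ a b, x b + 2 ≤ x a ∧ ∀ t ∈ Set.Ioo (x b) (x a), excess y t < excess x t := by
  classical
  have hstart : ∃ s, excess y (s + 1) < excess x (s + 1) := by
    obtain ⟨_ | s, ht⟩ := hlt
    · omega
    · exact ⟨s, ht⟩
  have hend : ∃ t, Nat.find hstart < t ∧ excess x t ≤ excess y t := by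
    refine ⟨Nat.find hstart + 1 + ∑ i, x i, by omega, ?_⟩
    rw [excess_eq_zero_of_le fun i => ?_]
    · exact Nat.zero_le _
    · have := single_le_sum (fun j _ => Nat.zero_le (x j)) (mem_univ i)
      omega
  set t₁ := Nat.find hstart
  set t₂ := Nat.find hend
  have ht₁ : excess y t₁ = excess x t₁ := by
    rcases h : t₁ with _ | s
    · exact h0
    · have := Nat.find_min hstart (h ▸ Nat.lt_succ_self s : s < t₁)
      have := hle (s + 1)
      omega
  have hstep : excess y (t₁ + 1) < excess x (t₁ + 1) := Nat.find_spec hstart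
  obtain ⟨ht₁₂, ht₂⟩ : t₁ < t₂ ∧ excess x t₂ ≤ excess y t₂ := Nat.find_spec hend
  have hbetween (t : ℕ) (h₁ : t₁ < t) (h₂ : t < t₂) : excess y t < excess x t := by
    have := Nat.find_min hend h₂
    push Not at this
    exact this h₁
  clear_value t₁ t₂
  have ht₂' : t₂ ≠ t₁ + 1 := by rintro rfl; omega
  obtain ⟨b, rfl⟩ := exists_apply_eq_of_excess_lt_succ hle ht₁ hstep
  obtain ⟨s, rfl⟩ : ∃ s, t₂ = s + 1 := ⟨t₂ - 1, by omega⟩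
  obtain ⟨a, ha⟩ := exists_apply_eq_succ_of_excess_lt (hbetween s (by omega) (by omega)) ht₂
    (hle _)
  exact ⟨a, b, by omega, fun t ht => hbetween t ht.1 (ha ▸ ht.2)⟩

end Excess

section MoveUnit

variable {ι : Type*} [DecidableEq ι]

def moveUnit (x : ι → ℕ) (a b : ι) : ι → ℕ :=
  Function.update (Function.update x a (x a - 1)) b (x b + 1)

lemma moveUnit_apply (x : ι → ℕ) (a b i : ι) :
    moveUnit x a b i = if i = b then x b + 1 else if i = a then x a - 1 else x i := by
  simp only [moveUnit, Function.update_apply]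

lemma excess_moveUnit_add [Fintype ι] {x : ι → ℕ} {a b : ι} (hab : x b < x a) (t : ℕ) :
    excess (moveUnit x a b) t + (if x b < t ∧ t < x a then 1 else 0) = excess x t := by
  have hne : a ≠ b := by rintro rfl; omega
  have key : ∀ i, (moveUnit x a b i - t) + ((if i = a then x a - t else 0) +
      (if i = b then x b - t else 0)) = (x i - t) + ((if i = a then x a - 1 - t else 0) +
      (if i = b then x b + 1 - t else 0)) := fun i => by
    rw [moveUnit_apply]
    split_ifs <;> subst_vars <;> omega
  have := sum_congr rfl fun i (_ : i ∈ univ) => key i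
  simp only [sum_add_distrib, sum_ite_eq', mem_univ, if_true] at this
  unfold excess
  split_ifs <;> omega

end MoveUnit

def HasZeroOneMatrix {m n : Type*} [Fintype m] [Fintype n] (r : m → ℕ) (c : n → ℕ) : Prop :=
  ∃ A : m → n → ℕ, (∀ i j, A i j ≤ 1) ∧ (∀ i, ∑ j, A i j = r i) ∧ (∀ j, ∑ i, A i j = c j)

namespace HasZeroOneMatrix

variable {m n : Type*} [Fintype m] [Fintype n] {r : m → ℕ} {c : n → ℕ}

lemma comp_perm (H : HasZeroOneMatrix r c) (σ : Equiv.Perm n) : HasZeroOneMatrix r (c ∘ σ) := by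
  obtain ⟨A, h01, hrow, hcol⟩ := H
  exact ⟨fun i j => A i (σ j), fun i j => h01 i (σ j),
    fun i => (Equiv.sum_comp σ (A i)).trans (hrow i), fun j => hcol (σ j)⟩

lemma moveUnit [DecidableEq n] (H : HasZeroOneMatrix r c) {a b : n} (hab : c b < c a) :
    HasZeroOneMatrix r (moveUnit c a b) := by
  classical
  obtain ⟨A, h01, hrow, hcol⟩ := H
  obtain ⟨k, hk⟩ : ∃ k, A k b < A k a := by
    by_contra! h
    have := sum_le_sum fun i (_ : i ∈ univ) => h i
    rw [hcol, hcol] at this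
    omega
  have hka : A k a = 1 := by have := h01 k a; omega
  have hkb : A k b = 0 := by omega
  set A' := Function.update A k (A k ∘ Equiv.swap a b)
  have hcol' (j : n) : ∑ i, A' i j + A k j = c j + A k (Equiv.swap a b j) := by
    have key (i : m) : A' i j + (if i = k then A k j else 0) =
        A i j + (if i = k then A k (Equiv.swap a b j) else 0) := by
      by_cases hi : i = k
      · subst hi; simp [A', add_comm]
      · simp [A', hi]
    have := sum_congr rfl fun i (_ : i ∈ univ) => key i
    simpa only [sum_add_distrib, sum_ite_eq', mem_univ, if_true, hcol] using this
  refine ⟨A', fun i j => ?_, fun i => ?_, fun j => ?_⟩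
  · by_cases hi : i = k
    · subst hi; simpa [A'] using h01 i _
    · simpa [A', hi] using h01 i j
  · by_cases hi : i = k
    · subst hi; simpa [A', hrow] using Equiv.sum_comp (Equiv.swap a b) (A i)
    · simpa [A', hi] using hrow i
  · have := hcol' j
    rw [moveUnit_apply]
    split_ifs with hjb hja
    · subst hjb; simp only [Equiv.swap_apply_right] at this; omega
    · subst hja; simp only [Equiv.swap_apply_left] at this; omega
    · rw [Equiv.swap_apply_of_ne_of_ne hja hjb] at this; omega

end HasZeroOneMatrix

lemma sum_le_topSum {T : ℕ} (x : Fin T → ℕ) {k : ℕ} {S : Finset (Fin T)} (hS : #S ≤ k) :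
    ∑ i ∈ S, x i ≤ topSum x k :=
  le_sup (f := fun S => ∑ i ∈ S, x i) (by simpa using hS)

lemma exists_sum_eq_topSum {T : ℕ} (x : Fin T → ℕ) (k : ℕ) :
    ∃ S : Finset (Fin T), #S ≤ k ∧ ∑ i ∈ S, x i = topSum x k := by
  obtain ⟨S, hS, hsum⟩ := exists_mem_eq_sup (univ.powerset.filter fun S : Finset (Fin T) => #S ≤ k)
    ⟨∅, by simp⟩ fun S => ∑ i ∈ S, x i
  exact ⟨S, (mem_filter.mp hS).2, hsum.symm⟩

/-- Apply majorization with `k = #{i | t < y i}`. -/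
lemma excess_le_excess_of_topSum_le {T : ℕ} {x y : Fin T → ℕ}
    (hmaj : ∀ k, topSum y k ≤ topSum x k) (t : ℕ) : excess y t ≤ excess x t := by
  set S : Finset (Fin T) := {i | t < y i}
  obtain ⟨S', hS', hsum⟩ := exists_sum_eq_topSum x #S
  have hy : ∑ i ∈ S, y i = excess y t + #S * t := by
    have : excess y t = ∑ i ∈ S, (y i - t) := (sum_filter_of_ne fun i _ h => by omega).symm
    rw [this, ← smul_eq_mul, ← sum_const, ← sum_add_distrib]
    exact sum_congr rfl fun i hi => by have := (mem_filter.mp hi).2; omega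
  have hx : ∑ i ∈ S', x i ≤ excess x t + #S' * t := by
    rw [← smul_eq_mul, ← sum_const]
    calc ∑ i ∈ S', x i ≤ ∑ i ∈ S', ((x i - t) + t) := sum_le_sum fun i _ => by omega
      _ ≤ excess x t + ∑ i ∈ S', t := by
        rw [sum_add_distrib]
        exact Nat.add_le_add_right (sum_le_sum_of_subset (subset_univ _)) _
  have := (sum_le_topSum y le_rfl).trans (hmaj #S)
  have := Nat.mul_le_mul_right t hS'
  omega

lemma HasZeroOneMatrix.of_excess_le {m n : Type*} [Fintype m] [Fintype n] [DecidableEq n]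
    {r : m → ℕ} {x y : n → ℕ} (h0 : excess y 0 = excess x 0)
    (hle : ∀ t, excess y t ≤ excess x t) (H : HasZeroOneMatrix r x) : HasZeroOneMatrix r y := by
  induction hΦ : ∑ t ∈ range (excess y 0), excess x t using Nat.strong_induction_on
    generalizing x with
  | _ Φ ih =>
  by_cases hlt : ∃ t, excess y t < excess x t
  · obtain ⟨a, b, hab, hgap⟩ := exists_excess_lt_on_Ioo h0 hle hlt
    have hba : x b < x a := by omega
    have hmove := excess_moveUnit_add hba
    refine ih _ ?_ ?_ (fun t => ?_) (H.moveUnit hba) rfl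
    · rw [← hΦ]
      refine sum_lt_sum (fun t _ => hmove t ▸ Nat.le_add_right _ _) ⟨x b + 1, ?_, ?_⟩
      · have := single_le_sum (fun j _ => Nat.zero_le (x j)) (mem_univ a)
        rw [mem_range, h0, excess_zero]
        omega
      · have := hmove (x b + 1)
        rw [if_pos (by omega)] at this
        omega
    · have := hmove 0
      rw [if_neg (by omega)] at this
      omega
    · have := hmove t
      have := hle t
      split_ifs at * with ht
      · have := hgap t ht; omega
      · omega
  · push Not at hlt
    obtain ⟨σ, rfl⟩ := exists_perm_of_excess_eq fun t => le_antisymm (hlt t) (hle t)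
    exact H.comp_perm σ

/-- If a (0,1)-matrix with row sums `r` and column sums `h` exists and `h'` is majorized
by `h`, then a (0,1)-matrix with row sums `r` and column sums `h'` also exists. -/
theorem zeroOne_exists_of_majorized (N T : ℕ) (h h' : Fin T → ℕ) (r : Fin N → ℕ)
    (hsum : ∑ j, h' j = ∑ j, h j)
    (hmaj : ∀ k, topSum h' k ≤ topSum h k) :
    (∃ A : Fin N → Fin T → ℕ,
        (∀ n j, A n j ≤ 1) ∧
        (∀ n, ∑ j, A n j = r n) ∧
        (∀ j, ∑ n, A n j = h j)) →
      (∃ A : Fin N → Fin T → ℕ,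
        (∀ n j, A n j ≤ 1) ∧
        (∀ n, ∑ j, A n j = r n) ∧
        (∀ j, ∑ n, A n j = h' j)) :=
  HasZeroOneMatrix.of_excess_le (by simpa using hsum) (excess_le_excess_of_topSum_le hmaj)
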